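/- arXiv:nlin/0412016 — 4 statements merged into one kernel-verified Lean document; each statement's English description precedes it below -/
import Mathlib

section
/- Let w : U → ℂ be holomorphic with w(0) = 0 and |w(z)| < 1 for all z ∈ U, let a_k denote the k-th Taylor coefficient of w at 0, and set a = (a_1,…,a_n) ∈ ℂ^n. Then for every u ∈ ℝ and every k with 1 ≤ k ≤ n, the k-th Taylor coefficient at 0 of the function z ↦ −w(z)·(e^{iu}+w(z))/(e^{iu}−w(z)) equals −a_k − 2∑_{s=1}^{k−1} e^{−isu} (A(a)^s a)_k. (Consequently, the first n Taylor coefficients of a solution of the Löwner ordinary differential equation dw/dt = −w(e^{iu(t)}+w)/(e^{iu(t)}−w) satisfy the phase system ȧ = −a − 2∑_{s=1}^{n−1} e^{−isu(t)} A(a)^s a.) -/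
open Complex Metric

/-- The `k`-th Taylor coefficient of `f` at `0`. -/
noncomputable def taylorCoeff (f : ℂ → ℂ) (k : ℕ) : ℂ :=
  iteratedDeriv k f 0 / Nat.factorial k

/-- The lower-triangular nilpotent Toeplitz matrix `A(a)` with `A(a)_{j,k} = a_{j-k}`
(1-indexed) for `j > k` and `0` otherwise. -/
noncomputable def toeplitzA {n : ℕ} (a : Fin n → ℂ) : Matrix (Fin n) (Fin n) ℂ :=
  Matrix.of fun j k =>
    if _ : (k : ℕ) < (j : ℕ) then a ⟨(j : ℕ) - (k : ℕ) - 1, by have := j.isLt; omega⟩ else 0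

/-- The Löwner kernel `p(ζ, u) = (e^{iu} + ζ)/(e^{iu} - ζ)`. -/
noncomputable def lkernel (ζ : ℂ) (u : ℝ) : ℂ :=
  (Complex.exp (u * Complex.I) + ζ) / (Complex.exp (u * Complex.I) - ζ)

/-!
Taylor coefficients at `0` of order `≤ K` only see a function modulo `z ^ (K + 1)` times an
analytic function, and this relation is compatible with sums and products, so it can be computed
with polynomials. Expanding `-w (E + w) / (E - w)` geometrically in `E⁻¹ w` up to an error
`w ^ (m + 2) · (analytic)`, which is `O(z ^ (m + 2))` because `w 0 = 0`, the Löwner right-hand side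
agrees to order `m + 1` with `-P - 2 ∑_{s=1}^{m} E⁻¹ ^ s P ^ (s + 1)` whenever `P` does with `w`.
Finally, on the coefficients of `z, …, z ^ n`, the Toeplitz matrix `A(a)` acts as multiplication
by `P = ∑ aⱼ z ^ j`, so `(A(a) ^ s a)_k` is the `k`-th coefficient of `P ^ (s + 1)`.
-/

open Filter Topology Polynomial

section Jets

variable {𝕜 : Type*} [NontriviallyNormedField 𝕜]

/-- `f` agrees with `P` to order `K` at `0`; unlike a jet proper, `P` is not truncated at degree
`K`. -/
def HasJet (K : ℕ) (f : 𝕜 → 𝕜) (P : 𝕜[X]) : Prop :=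
  ∃ g : 𝕜 → 𝕜, AnalyticAt 𝕜 g 0 ∧ ∀ᶠ z in 𝓝 0, f z = P.eval z + z ^ (K + 1) * g z

namespace HasJet

variable {K : ℕ} {f g : 𝕜 → 𝕜} {P Q : 𝕜[X]}

lemma congr (h : HasJet K f P) (hfg : g =ᶠ[𝓝 0] f) : HasJet K g P := by
  obtain ⟨r, hr, hf⟩ := h
  exact ⟨r, hr, hfg.trans hf⟩

lemma mono {N : ℕ} (h : HasJet N f P) (hK : K ≤ N) : HasJet K f P := by
  obtain ⟨r, hr, hf⟩ := h
  refine ⟨fun z => z ^ (N - K) * r z, (analyticAt_id.pow _).mul hr, ?_⟩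
  filter_upwards [hf] with z hz
  rw [hz, ← mul_assoc, ← pow_add, show K + 1 + (N - K) = N + 1 by omega]

lemma add (hf : HasJet K f P) (hg : HasJet K g Q) : HasJet K (fun z => f z + g z) (P + Q) := by
  obtain ⟨r, hr, hf⟩ := hf
  obtain ⟨s, hs, hg⟩ := hg
  refine ⟨fun z => r z + s z, hr.add hs, ?_⟩
  filter_upwards [hf, hg] with z hfz hgz
  rw [hfz, hgz, eval_add]
  ring

lemma neg (hf : HasJet K f P) : HasJet K (fun z => -f z) (-P) := by
  obtain ⟨r, hr, hf⟩ := hf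
  refine ⟨fun z => -r z, hr.neg, ?_⟩
  filter_upwards [hf] with z hfz
  rw [hfz, eval_neg]
  ring

lemma sub (hf : HasJet K f P) (hg : HasJet K g Q) : HasJet K (fun z => f z - g z) (P - Q) := by
  simpa only [sub_eq_add_neg] using hf.add hg.neg

lemma mul (hf : HasJet K f P) (hg : HasJet K g Q) : HasJet K (fun z => f z * g z) (P * Q) := by
  obtain ⟨r, hr, hf⟩ := hf
  obtain ⟨s, hs, hg⟩ := hg
  have hP := AnalyticOnNhd.eval_polynomial (𝕜 := 𝕜) P 0 trivial
  have hQ := AnalyticOnNhd.eval_polynomial (𝕜 := 𝕜) Q 0 trivial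
  refine ⟨fun z => P.eval z * s z + r z * Q.eval z + z ^ (K + 1) * (r z * s z),
    (((hP.mul hs).add (hr.mul hQ)).add ((analyticAt_id.pow _).mul (hr.mul hs))), ?_⟩
  filter_upwards [hf, hg] with z hfz hgz
  rw [hfz, hgz, eval_mul]
  ring

lemma const_mul (hf : HasJet K f P) (c : 𝕜) : HasJet K (fun z => c * f z) (C c * P) :=
  (show HasJet K (fun _ => c) (C c) from ⟨0, analyticAt_const, by simp⟩).mul hf

lemma pow (hf : HasJet K f P) (m : ℕ) : HasJet K (fun z => f z ^ m) (P ^ m) := by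
  induction m with
  | zero => exact ⟨0, analyticAt_const, by simp⟩
  | succ m ih => simpa only [pow_succ] using ih.mul hf

lemma sum {ι : Type*} (s : Finset ι) {f : ι → 𝕜 → 𝕜} {P : ι → 𝕜[X]}
    (h : ∀ i ∈ s, HasJet K (f i) (P i)) :
    HasJet K (fun z => ∑ i ∈ s, f i z) (∑ i ∈ s, P i) := by
  classical
  induction s using Finset.induction_on with
  | empty => exact ⟨0, analyticAt_const, by simp⟩
  | insert i s hi ih =>
    simp only [Finset.sum_insert hi]
    exact (h i (s.mem_insert_self i)).add (ih fun j hj => h j (Finset.mem_insert_of_mem hj))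

end HasJet

lemma hasJet_pow_succ_mul_zero {f g : 𝕜 → 𝕜} (hf : AnalyticAt 𝕜 f 0) (hf0 : f 0 = 0)
    (hg : AnalyticAt 𝕜 g 0) (K : ℕ) : HasJet K (fun z => f z ^ (K + 1) * g z) 0 := by
  obtain ⟨h, hh, hfh⟩ := (natCast_le_analyticOrderAt hf (n := 1)).1 <| by
    simpa [Order.one_le_iff_ne_zero] using analyticOrderAt_ne_zero.2 ⟨hf, hf0⟩
  refine ⟨fun z => h z ^ (K + 1) * g z, (hh.pow _).mul hg, ?_⟩
  filter_upwards [hfh] with z hz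
  rw [hz, sub_zero, pow_one, smul_eq_mul, eval_zero, zero_add, mul_pow, mul_assoc]

lemma AnalyticAt.exists_hasJet [CharZero 𝕜] [CompleteSpace 𝕜] {f : 𝕜 → 𝕜}
    (hf : AnalyticAt 𝕜 f 0) (K : ℕ) : ∃ P, HasJet K f P := by
  obtain ⟨g, hg, hfg⟩ := hf.exists_eventuallyEq_sum_add_pow_mul (K + 1)
  refine ⟨∑ i ∈ Finset.range (K + 1), C (iteratedDeriv i f 0 / i.factorial) * X ^ i, g, hg, ?_⟩
  filter_upwards [hfg] with z hz
  rw [hz, eval_finsetSum]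
  simp only [eval_C_mul, eval_X_pow, smul_eq_mul]
  congr 1
  exact Finset.sum_congr rfl fun i _ => by ring

end Jets

lemma neg_mul_add_div_sub_eq_sum {F : Type*} [Field F] {E x : F} (hE : E ≠ 0) (hx : E - x ≠ 0)
    (m : ℕ) :
    -x * ((E + x) / (E - x)) =
      -x - 2 * ∑ s ∈ Finset.Icc 1 m, E⁻¹ ^ s * x ^ (s + 1)
        + x ^ (m + 2) * (-2 / (E ^ m * (E - x))) := by
  induction m with
  | zero =>
    rw [Finset.Icc_eq_empty (by omega), Finset.sum_empty]
    field_simp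
    ring
  | succ m ih =>
    rw [ih, Finset.sum_Icc_succ_top (by omega), inv_pow]
    field_simp
    ring

lemma HasJet.neg_mul_add_div_sub {𝕜 : Type*} [NontriviallyNormedField 𝕜] {E : 𝕜} (hE : E ≠ 0)
    {w : 𝕜 → 𝕜} (hw : AnalyticAt 𝕜 w 0) (hw0 : w 0 = 0) {m : ℕ} {P : 𝕜[X]}
    (hP : HasJet (m + 1) w P) :
    HasJet (m + 1) (fun z => -w z * ((E + w z) / (E - w z)))
      (-P - C 2 * ∑ s ∈ Finset.Icc 1 m, C (E⁻¹ ^ s) * P ^ (s + 1)) := by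
  have hsub : AnalyticAt 𝕜 (fun z => E - w z) 0 := analyticAt_const.sub hw
  have hsub0 : E - w 0 ≠ 0 := by rwa [hw0, sub_zero]
  have hexpand : (fun z => -w z * ((E + w z) / (E - w z))) =ᶠ[𝓝 0] fun z =>
      -w z - 2 * ∑ s ∈ Finset.Icc 1 m, E⁻¹ ^ s * w z ^ (s + 1)
        + w z ^ (m + 2) * (-2 / (E ^ m * (E - w z))) := by
    filter_upwards [hsub.continuousAt.eventually_ne hsub0] with z hz
    exact neg_mul_add_div_sub_eq_sum hE hz m
  have hrem := hasJet_pow_succ_mul_zero (g := fun z => -2 / (E ^ m * (E - w z))) hw hw0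
    (analyticAt_const.div (analyticAt_const.mul hsub) (mul_ne_zero (pow_ne_zero m hE) hsub0))
    (m + 1)
  simpa using ((hP.neg.sub ((HasJet.sum _ fun s _ =>
    (hP.pow (s + 1)).const_mul (E⁻¹ ^ s)).const_mul 2)).add hrem).congr hexpand

lemma taylorCoeff_zero (f : ℂ → ℂ) : taylorCoeff f 0 = f 0 := by
  simp [taylorCoeff]

lemma taylorCoeff_eval (P : ℂ[X]) (k : ℕ) : taylorCoeff (fun z => P.eval z) k = P.coeff k := by
  have hderiv : ∀ Q : ℂ[X], deriv (fun z => Q.eval z) = fun z => (derivative Q).eval z :=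
    fun Q => funext fun _ => Polynomial.deriv Q
  have hiter : iteratedDeriv k (fun z => P.eval z) = fun z => (derivative^[k] P).eval z := by
    induction k generalizing P with
    | zero => rfl
    | succ k ih => rw [iteratedDeriv_succ', hderiv, ih, Function.iterate_succ_apply]
  rw [taylorCoeff, hiter]
  dsimp only
  rw [← coeff_zero_eq_eval_zero, coeff_iterate_derivative, zero_add,
    Nat.descFactorial_self, nsmul_eq_mul,
    mul_div_cancel_left₀ _ (by exact_mod_cast k.factorial_ne_zero)]

lemma HasJet.taylorCoeff_eq {K : ℕ} {f : ℂ → ℂ} {P : ℂ[X]} (h : HasJet K f P) {k : ℕ}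
    (hk : k ≤ K) : taylorCoeff f k = P.coeff k := by
  obtain ⟨g, hg, hfg⟩ := h
  have hP : AnalyticAt ℂ (fun z => P.eval z) 0 := AnalyticOnNhd.eval_polynomial P 0 trivial
  have hrem : AnalyticAt ℂ (fun z => z ^ (K + 1) * g z) 0 := (analyticAt_id.pow _).mul hg
  have hrem0 : iteratedDeriv k (fun z => z ^ (K + 1) * g z) 0 = 0 := by
    refine (natCast_le_analyticOrderAt_iff_iteratedDeriv_eq_zero hrem (n := K + 1)).1 ?_ k
      (by omega)
    exact (natCast_le_analyticOrderAt hrem).2 ⟨g, hg, by simp⟩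
  rw [taylorCoeff, EventuallyEq.iteratedDeriv_eq k hfg,
    iteratedDeriv_fun_add hP.contDiffAt hrem.contDiffAt, hrem0, add_zero, ← taylorCoeff,
    taylorCoeff_eval]

section Toeplitz

open Matrix

variable {n : ℕ}

lemma toeplitzA_mulVec_eq_coeff_mul (a : Fin n → ℂ) {v : Fin n → ℂ} {P Q : ℂ[X]}
    (hP0 : P.coeff 0 = 0) (hP : ∀ i : Fin n, P.coeff (i + 1) = a i)
    (hQ0 : Q.coeff 0 = 0) (hQ : ∀ i : Fin n, Q.coeff (i + 1) = v i) (j : Fin n) :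
    (toeplitzA a *ᵥ v) j = (P * Q).coeff (j + 1) := by
  have hentry : ∀ i : Fin n, toeplitzA a j i * v i =
      if (i : ℕ) < j then P.coeff (j - i) * Q.coeff (i + 1) else 0 := by
    intro i
    rw [toeplitzA, Matrix.of_apply]
    split_ifs with hij
    · rw [← hQ, ← hP]
      congr 2
      simp only
      omega
    · exact zero_mul _
  calc (toeplitzA a *ᵥ v) j
      = ∑ i ∈ Finset.range n, if i < j then P.coeff (j - i) * Q.coeff (i + 1) else 0 := by
        simp only [mulVec, dotProduct, hentry]
        exact Fin.sum_univ_eq_sum_range (fun i => if i < j then P.coeff (j - i) * Q.coeff (i + 1)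
          else 0) n
    _ = ∑ i ∈ Finset.range j, P.coeff (j - i) * Q.coeff (i + 1) := by
        rw [Finset.sum_ite, Finset.sum_const_zero, add_zero]
        congr 1
        ext i
        simp only [Finset.mem_filter, Finset.mem_range]
        omega
    _ = (P * Q).coeff (j + 1) := by
        rw [mul_comm, coeff_mul, Finset.Nat.sum_antidiagonal_eq_sum_range_succ
          (fun q p => Q.coeff q * P.coeff p), Finset.sum_range_succ', Finset.sum_range_succ]
        simp [hP0, hQ0, mul_comm]

lemma toeplitzA_pow_mulVec_eq_coeff_pow (a : Fin n → ℂ) {P : ℂ[X]} (hP0 : P.coeff 0 = 0)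
    (hP : ∀ i : Fin n, P.coeff (i + 1) = a i) (s : ℕ) (j : Fin n) :
    (toeplitzA a ^ s *ᵥ a) j = (P ^ (s + 1)).coeff (j + 1) := by
  induction s generalizing j with
  | zero => simp [hP]
  | succ s ih =>
    rw [pow_succ', ← mulVec_mulVec, toeplitzA_mulVec_eq_coeff_mul a hP0 hP
      (by rw [coeff_zero_eq_eval_zero, eval_pow, ← coeff_zero_eq_eval_zero, hP0,
        zero_pow s.succ_ne_zero])
      (fun i => (ih i).symm), ← pow_succ']

end Toeplitz

theorem taylorCoeff_loewner_rhs_general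
    (n : ℕ) (w : ℂ → ℂ)
    (hw : DifferentiableOn ℂ w (ball (0 : ℂ) 1)) (hw0 : w 0 = 0)
    (a : Fin n → ℂ) (ha : ∀ k : Fin n, a k = taylorCoeff w (k.1 + 1)) :
    ∀ u : ℝ, ∀ k : Fin n,
      taylorCoeff (fun z => -(w z) * lkernel (w z) u) (k.1 + 1)
        = -(a k) - 2 * ∑ s ∈ Finset.Icc 1 (k.1 : ℕ),
            Complex.exp (-(s : ℂ) * (u : ℂ) * Complex.I) * ((toeplitzA a ^ s).mulVec a) k := by
  intro u k
  have hwa : AnalyticAt ℂ w 0 := hw.analyticAt (ball_mem_nhds 0 one_pos)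
  obtain ⟨P, hP⟩ := hwa.exists_hasJet n
  have hP0 : P.coeff 0 = 0 := by rw [← hP.taylorCoeff_eq n.zero_le, taylorCoeff_zero, hw0]
  have hPa : ∀ i : Fin n, P.coeff (i + 1) = a i := fun i => by rw [ha, hP.taylorCoeff_eq i.isLt]
  have hjet := (hP.mono k.isLt).neg_mul_add_div_sub (Complex.exp_ne_zero (u * I)) hwa hw0
  unfold lkernel
  rw [hjet.taylorCoeff_eq le_rfl]
  simp only [coeff_sub, coeff_neg, coeff_C_mul, finsetSum_coeff, hPa,
    ← toeplitzA_pow_mulVec_eq_coeff_pow a hP0 hPa]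
  congr 2
  refine Finset.sum_congr rfl fun s _ => ?_
  rw [← Complex.exp_neg, ← Complex.exp_nat_mul]
  ring_nf

/-- for a holomorphic self-map `w` of the unit disk fixing `0`, with first `n`
Taylor coefficients `a = (a_1, …, a_n)`, the `k`-th Taylor coefficient of
`-w·(e^{iu}+w)/(e^{iu}-w)` equals `-a_k - 2∑_{s=1}^{k-1} e^{-isu}(A(a)^s a)_k`. -/
theorem taylorCoeff_loewner_rhs
    (n : ℕ) (w : ℂ → ℂ)
    (hw : DifferentiableOn ℂ w (ball (0 : ℂ) 1)) (hw0 : w 0 = 0)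
    (hbd : ∀ z ∈ ball (0 : ℂ) 1, ‖w z‖ < 1)
    (a : Fin n → ℂ) (ha : ∀ k : Fin n, a k = taylorCoeff w (k.1 + 1)) :
    ∀ u : ℝ, ∀ k : Fin n,
      taylorCoeff (fun z => -(w z) * lkernel (w z) u) (k.1 + 1)
        = -(a k) - 2 * ∑ s ∈ Finset.Icc 1 (k.1 : ℕ),
            Complex.exp (-(s : ℂ) * (u : ℂ) * Complex.I) * ((toeplitzA a ^ s).mulVec a) k :=
  taylorCoeff_loewner_rhs_general n w hw hw0 a ha
end

section
/- Let f : U → ℂ be holomorphic with f(0) = 0, let b_k denote the k-th Taylor coefficient of f at 0, and let u ∈ ℝ. Then for every k ≥ 1, the k-th Taylor coefficient at 0 of the function ζ ↦ ζ · f'(ζ) · (e^{iu}+ζ)/(e^{iu}−ζ) equals k·b_k + 2∑_{j=1}^{k−1} j·b_j·e^{−i(k−j)u}. (Consequently, the Taylor coefficients of a subordination chain f(ζ,t) satisfying the Löwner partial differential equation ∂f/∂t = ζ·∂f/∂ζ·(e^{iu(t)}+ζ)/(e^{iu(t)}−ζ) satisfy ḃ_k = k b_k + 2∑_{j=1}^{k−1}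 j b_j e^{−i(k−j)u(t)}.) -/
/-!
By the Leibniz rule, the Taylor coefficients at `0` of a product of functions smooth at `0` are
the Cauchy product of the coefficients of the factors. Those of `ζ f'(ζ)` are `k b_k`. Near `0`
the kernel equals `2 e^{iu} (e^{iu} - ζ)⁻¹ - 1`, a geometric series with coefficients `1` and
`2 e^{-inu}` for `n ≥ 1`, and the `j = 0` term of the Cauchy product vanishes.
-/

open Complex Metric

open Finset

theorem taylorCoeff_mul {f g : ℂ → ℂ} {k : ℕ} (hf : ContDiffAt ℂ k f 0)
    (hg : ContDiffAt ℂ k g 0) :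
    taylorCoeff (fun z => f z * g z) k =
      ∑ p ∈ antidiagonal k, taylorCoeff f p.1 * taylorCoeff g p.2 := by
  simp only [taylorCoeff, iteratedDeriv_fun_mul hf hg,
    Nat.sum_antidiagonal_eq_sum_range_succ_mk, sum_div]
  refine sum_congr rfl fun i hi => ?_
  rw [Nat.cast_choose ℂ (Nat.le_of_lt_succ (mem_range.mp hi))]
  field_simp [Nat.factorial_ne_zero]

theorem taylorCoeff_id (n : ℕ) : taylorCoeff (fun z => z) n = if n = 1 then 1 else 0 := by
  split_ifs with h <;> simp [taylorCoeff, iteratedDeriv_fun_id_zero, h]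

theorem taylorCoeff_id_mul {g : ℂ → ℂ} {k : ℕ} (hg : ContDiffAt ℂ (k + 1) g 0) :
    taylorCoeff (fun z => z * g z) (k + 1) = taylorCoeff g k := by
  rw [taylorCoeff_mul (f := fun z => z) contDiffAt_id (by exact_mod_cast hg),
    Nat.sum_antidiagonal_succ, sum_eq_single_of_mem (0, k) (by simp)]
  · simp [taylorCoeff_id]
  · rintro ⟨i, j⟩ hij hne
    have hi : i ≠ 0 := by rintro rfl; simp_all
    simp [taylorCoeff_id, hi]

theorem taylorCoeff_inv_sub {a : ℂ} (ha : a ≠ 0) (n : ℕ) :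
    taylorCoeff (fun z => (a - z)⁻¹) n = a⁻¹ ^ (n + 1) := by
  have h := congrFun (iter_deriv_inv_linear_sub n (-1 : ℂ) (-a)) 0
  simp only [neg_mul, one_mul, sub_neg_eq_add, neg_add_eq_sub, mul_zero, zero_add] at h
  have hexp : (-1 - n : ℤ) = -((n + 1 : ℕ) : ℤ) := by push_cast; ring
  rw [taylorCoeff, iteratedDeriv_eq_iterate, h, hexp, zpow_neg, zpow_natCast, inv_pow,
    mul_right_comm _ _ ((-1) ^ n), ← mul_pow]
  field_simp [Nat.factorial_ne_zero]
  norm_num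

theorem taylorCoeff_deriv (f : ℂ → ℂ) (n : ℕ) :
    taylorCoeff (deriv f) n = (n + 1) * taylorCoeff f (n + 1) := by
  rw [taylorCoeff, taylorCoeff, iteratedDeriv_succ', Nat.factorial_succ]
  push_cast
  field_simp [Nat.factorial_ne_zero]

theorem taylorCoeff_id_mul_deriv {f : ℂ → ℂ} (hf : AnalyticAt ℂ f 0) (k : ℕ) :
    taylorCoeff (fun z => z * deriv f z) k = k * taylorCoeff f k := by
  cases k with
  | zero => simp [taylorCoeff]
  | succ k =>
    rw [taylorCoeff_id_mul hf.deriv.contDiffAt, taylorCoeff_deriv]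
    push_cast
    rfl

theorem taylorCoeff_add_div_sub {a : ℂ} (ha : a ≠ 0) (n : ℕ) :
    taylorCoeff (fun z => (a + z) / (a - z)) n = if n = 0 then 1 else 2 * a⁻¹ ^ n := by
  cases n with
  | zero => simp [taylorCoeff, ha]
  | succ n =>
    have hnear : (fun z => (a + z) / (a - z)) =ᶠ[nhds 0] fun z => -1 + 2 * a * (a - z)⁻¹ := by
      filter_upwards [isOpen_ne.mem_nhds (Ne.symm ha)] with z hz
      field_simp [sub_ne_zero.mpr hz.symm]
      ring
    rw [taylorCoeff, hnear.iteratedDeriv_eq, iteratedDeriv_const_add n.succ_pos,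
      iteratedDeriv_const_mul_field, mul_div_assoc, ← taylorCoeff, taylorCoeff_inv_sub ha]
    simp only [n.succ_ne_zero, if_false]
    rw [pow_succ', ← mul_assoc, mul_assoc 2, mul_inv_cancel₀ ha, mul_one]

theorem taylorCoeff_lkernel (u : ℝ) (n : ℕ) :
    taylorCoeff (fun ζ => lkernel ζ u) n =
      if n = 0 then 1 else 2 * Complex.exp (-(n : ℂ) * u * Complex.I) := by
  simp only [lkernel]
  rw [taylorCoeff_add_div_sub (Complex.exp_ne_zero _),
    ← Complex.exp_neg, ← Complex.exp_nat_mul]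
  ring_nf

theorem taylorCoeff_loewner_pde_rhs_general
    (f : ℂ → ℂ) (hf : DifferentiableOn ℂ f (ball (0 : ℂ) 1))
    (b : ℕ → ℂ) (hb : ∀ k, b k = taylorCoeff f k) (u : ℝ) :
    ∀ k : ℕ, 1 ≤ k →
      taylorCoeff (fun ζ => ζ * deriv f ζ * lkernel ζ u) k
        = (k : ℂ) * b k + 2 * ∑ j ∈ Finset.Icc 1 (k - 1),
            (j : ℂ) * b j * Complex.exp (-((k : ℂ) - (j : ℂ)) * (u : ℂ) * Complex.I) := by
  intro k hk
  have hfa : AnalyticAt ℂ f 0 := hf.analyticAt (ball_mem_nhds 0 one_pos)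
  have hker : ContDiffAt ℂ k (fun ζ => lkernel ζ u) 0 := by
    unfold lkernel
    fun_prop (disch := simp [Complex.exp_ne_zero])
  have hmul : ContDiffAt ℂ k (fun ζ => ζ * deriv f ζ) 0 :=
    (analyticAt_id.mul hfa.deriv).contDiffAt
  rw [taylorCoeff_mul hmul hker, Nat.sum_antidiagonal_eq_sum_range_succ_mk, sum_range_succ,
    range_eq_Ico, sum_eq_sum_Ico_succ_bot hk,
    ← Icc_sub_one_right_eq_Ico_of_not_isMin (by simpa using Nat.one_le_iff_ne_zero.mp hk)]
  simp only [taylorCoeff_id_mul_deriv hfa, taylorCoeff_lkernel, ← hb, mul_sum, Nat.sub_self,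
    if_pos, Nat.cast_zero, zero_mul, zero_add, mul_one]
  rw [add_comm]
  congr 1
  refine sum_congr rfl fun j hj => ?_
  have hjk : j < k := by grind
  rw [if_neg (Nat.sub_ne_zero_of_lt hjk), Nat.cast_sub hjk.le]
  ring_nf

/-- for `f` holomorphic on the unit disk with `f(0) = 0` and Taylor
coefficients `b_k`, the `k`-th Taylor coefficient of `ζ·f'(ζ)·(e^{iu}+ζ)/(e^{iu}-ζ)`
equals `k·b_k + 2∑_{j=1}^{k-1} j·b_j·e^{-i(k-j)u}`. -/
theorem taylorCoeff_loewner_pde_rhs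
    (f : ℂ → ℂ) (hf : DifferentiableOn ℂ f (ball (0 : ℂ) 1)) (hf0 : f 0 = 0)
    (b : ℕ → ℂ) (hb : ∀ k, b k = taylorCoeff f k) (u : ℝ) :
    ∀ k : ℕ, 1 ≤ k →
      taylorCoeff (fun ζ => ζ * deriv f ζ * lkernel ζ u) k
        = (k : ℂ) * b k + 2 * ∑ j ∈ Finset.Icc 1 (k - 1),
            (j : ℂ) * b j * Complex.exp (-((k : ℂ) - (j : ℂ)) * (u : ℂ) * Complex.I) :=
  taylorCoeff_loewner_pde_rhs_general f hf b hb u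
end

section
/- Fix n ≥ 1 and define Φ_j : ℂ^n × ℂ^n → ℂ by Φ_j(a,p) = ∑_{m=j}^{n} (m−j+1) a_{m−j+1} p_m for 1 ≤ j ≤ n. Then the ⌈n/2⌉ functions Φ_{⌊n/2⌋+1}, …, Φ_n are pairwise in involution: for all s, k with ⌊n/2⌋ + 1 ≤ s, k ≤ n, the Poisson bracket {Φ_s, Φ_k} vanishes identically on ℂ^n × ℂ^n. -/
open Complex

/-- `Φ_j(a,p) = ∑_{m=j}^n (m-j+1) a_{m-j+1} p_m` (1-indexed). -/
noncomputable def Phi {n : ℕ} (j : Fin n) (a p : Fin n → ℂ) : ℂ :=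
  ∑ m : Fin n, if _ : j.1 ≤ m.1 then
    ((m.1 - j.1 + 1 : ℕ) : ℂ) * a ⟨m.1 - j.1, by have := m.isLt; omega⟩ * p m
  else 0

/-- Complex partial derivative of `f(a,p)` in the coordinate `a_k`. -/
noncomputable def pderivA {n : ℕ} (f : (Fin n → ℂ) → (Fin n → ℂ) → ℂ) (k : Fin n)
    (a p : Fin n → ℂ) : ℂ :=
  deriv (fun z => f (Function.update a k z) p) (a k)

/-- Complex partial derivative of `f(a,p)` in the coordinate `p_k`. -/
noncomputable def pderivP {n : ℕ} (f : (Fin n → ℂ) → (Fin n → ℂ) → ℂ) (k : Fin n)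
    (a p : Fin n → ℂ) : ℂ :=
  deriv (fun z => f a (Function.update p k z)) (p k)

/-- The Poisson bracket `{f,g} = ∑_k (∂f/∂a_k ∂g/∂p_k − ∂f/∂p_k ∂g/∂a_k)`. -/
noncomputable def poisson {n : ℕ} (f g : (Fin n → ℂ) → (Fin n → ℂ) → ℂ)
    (a p : Fin n → ℂ) : ℂ :=
  ∑ k : Fin n, (pderivA f k a p * pderivP g k a p - pderivP f k a p * pderivA g k a p)

/-!
In the coordinates `a_i, p_m` (indices from `0`), `Φ_j` is the bilinear form `∑ (i + 1) a_i p_{i+j}`,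
so `∂Φ_j/∂a_i = (i + 1) p_{i+j}` and `∂Φ_j/∂p_i = (i - j + 1) a_{i-j}`, each vanishing when its index
leaves `Fin n`. The `i`-th term of `{Φ_s, Φ_k}` is nonzero only if `i + s < n` and `k ≤ i`, or the
same with `s` and `k` swapped; either way `s + k < n`.
For `s, k ≥ ⌊n/2⌋` this forces `s = k`, and `{Φ_s, Φ_s} = 0` by antisymmetry.
-/

section PartialDerivatives

variable {𝕜 ι : Type*} [NontriviallyNormedField 𝕜] [DecidableEq ι]

theorem deriv_sum_mul_update_comp {κ : Type*} [Fintype κ] (b : κ → 𝕜) (x : ι → 𝕜) (τ : κ → ι)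
    (i : ι) :
    deriv (fun z => ∑ m, b m * Function.update x i z (τ m)) (x i) =
      ∑ m, if τ m = i then b m else 0 := by
  have hterm (m : κ) : HasDerivAt (fun z => b m * Function.update x i z (τ m))
      (if τ m = i then b m else 0) (x i) := by
    split_ifs with h
    · simpa [h] using (hasDerivAt_id (x i)).const_mul (b m)
    · simpa [Function.update_of_ne h] using hasDerivAt_const (x i) (b m * x (τ m))
  exact (HasDerivAt.fun_sum fun m _ => hterm m).deriv

theorem deriv_sum_mul_update [Fintype ι] (c x : ι → 𝕜) (i : ι) :
    deriv (fun z => ∑ m, c m * Function.update x i z m) (x i) = c i := by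
  simpa using deriv_sum_mul_update_comp c x id i

end PartialDerivatives

theorem poisson_self {n : ℕ} (f : (Fin n → ℂ) → (Fin n → ℂ) → ℂ) (a p : Fin n → ℂ) :
    poisson f f a p = 0 :=
  Finset.sum_eq_zero fun _ _ => by ring

section Phi

variable {n : ℕ} (j i : Fin n) (a p : Fin n → ℂ)

theorem Phi_eq_sum_mul_p :
    Phi j a p = ∑ m : Fin n, (if j.1 ≤ m.1 then
      ((m.1 - j.1 + 1 : ℕ) : ℂ) * a ⟨m.1 - j.1, by have := m.isLt; omega⟩ else 0) * p m := by
  refine Finset.sum_congr rfl fun m _ => ?_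
  split_ifs <;> simp

theorem Phi_eq_sum_mul_a :
    Phi j a p = ∑ m : Fin n, (if j.1 ≤ m.1 then ((m.1 - j.1 + 1 : ℕ) : ℂ) * p m else 0) *
      a ⟨m.1 - j.1, by have := m.isLt; omega⟩ := by
  refine Finset.sum_congr rfl fun m _ => ?_
  split_ifs <;> simp [mul_right_comm]

theorem pderivP_Phi :
    pderivP (Phi j) i a p =
      if j.1 ≤ i.1 then ((i.1 - j.1 + 1 : ℕ) : ℂ) * a ⟨i.1 - j.1, by have := i.isLt; omega⟩
      else 0 := by
  simp only [pderivP, Phi_eq_sum_mul_p j a]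
  exact deriv_sum_mul_update _ p i

theorem pderivA_Phi :
    pderivA (Phi j) i a p =
      if h : i.1 + j.1 < n then ((i.1 + 1 : ℕ) : ℂ) * p ⟨i.1 + j.1, h⟩ else 0 := by
  simp only [pderivA, Phi_eq_sum_mul_a j _ p]
  rw [deriv_sum_mul_update_comp]
  have hsummand (m : Fin n) :
      (if (⟨m.1 - j.1, by have := m.isLt; omega⟩ : Fin n) = i then
        (if j.1 ≤ m.1 then ((m.1 - j.1 + 1 : ℕ) : ℂ) * p m else 0) else 0) =
      if m.1 = i.1 + j.1 then ((i.1 + 1 : ℕ) : ℂ) * p m else 0 := by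
    simp only [Fin.ext_iff]
    split_ifs <;> first | rfl | omega | (congr 2; omega)
  simp only [hsummand]
  split_ifs with h
  · simpa [Fin.ext_iff] using Finset.sum_ite_eq' Finset.univ (⟨i.1 + j.1, h⟩ : Fin n)
      (fun m => ((i.1 + 1 : ℕ) : ℂ) * p m)
  · exact Finset.sum_eq_zero fun m _ => if_neg fun hm : m.1 = i.1 + j.1 => h (hm ▸ m.isLt)

end Phi

theorem poisson_Phi_eq_zero_of_le_add {n : ℕ} {s k : Fin n} (hsk : n ≤ s.1 + k.1)
    (a p : Fin n → ℂ) : poisson (Phi s) (Phi k) a p = 0 := by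
  refine Finset.sum_eq_zero fun i _ => ?_
  simp only [pderivA_Phi, pderivP_Phi]
  split_ifs <;> first | omega | simp

theorem poisson_Phi_upper_involutive_general
    (n : ℕ) (s k : Fin n) (hs : n / 2 ≤ s.1) (hk : n / 2 ≤ k.1) :
    ∀ a p : Fin n → ℂ, poisson (Phi s) (Phi k) a p = 0 := by
  intro a p
  rcases eq_or_ne s k with rfl | hne
  · exact poisson_self _ a p
  · have hsk : s.1 ≠ k.1 := Fin.val_ne_of_ne hne
    exact poisson_Phi_eq_zero_of_le_add (by omega) a p

/-- the functions `Φ_{⌊n/2⌋+1}, …, Φ_n` are pairwise in involution. -/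
theorem poisson_Phi_upper_involutive
    (n : ℕ) (hn : 1 ≤ n) (s k : Fin n) (hs : n / 2 ≤ s.1) (hk : n / 2 ≤ k.1) :
    ∀ a p : Fin n → ℂ, poisson (Phi s) (Phi k) a p = 0 :=
  poisson_Phi_upper_involutive_general n s k hs hk
end

section
/- Fix n ≥ 1 and define the real Hamiltonian H : ℂ^n × ℂ^n × ℝ → ℝ by H(a,q,u) = 2 Re[ ∑_{k=1}^{n} (−a − 2∑_{s=1}^{n−1} e^{−isu} A(a)^s a)_k q_k ]. Let I ⊆ ℝ be an interval, let u : I → ℝ be differentiable, and let a, q : I → ℂ^n be differentiable and satisfy the phase system a'(t) = −a(t) − 2∑_{s=1}^{n−1} e^{−isu(t)} A(a(t))^s a(t) and the adjoint system q'(t) = q(t) + 2∑_{s=1}^{n−1} e^{−isu(t)}(s+1)(A(a(t))ᵀ)^s q(t). If ∂H/∂u (a(t), q(t), u(t)) = 0 for all t ∈ I, then the function t ↦ H(a(t), q(t), u(t)) is constant on I. -/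
/-!
Write `f(a, u)` for the right-hand side of the phase system, so that `H = 2 Re (f(a, u) ⬝ᵥ q)`
and the adjoint system reads `q' = -(∂f/∂a)ᵀ q`. Along a trajectory
`d/dt (f ⬝ᵥ q) = (∂f/∂a f + u' ∂f/∂u) ⬝ᵥ q - f ⬝ᵥ (∂f/∂a)ᵀ q = u' (∂f/∂u ⬝ᵥ q)`,
i.e. `dH/dt = u' ∂H/∂u = 0`. The Jacobian comes from `d/dt (A(a)^s a) = (s + 1) A(a)^s a'`,
which holds because the matrices `A(x)` are the multiplications by `X x(X)` in `ℂ[X]/(Xⁿ)`: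
they commute, and `A(x) y = A(y) x`.
-/

open Complex Metric

/-- The real Hamiltonian
`H(a,q,u) = 2 Re[∑_{k=1}^n (-a - 2∑_{s=1}^{n-1} e^{-isu} A(a)^s a)_k q_k]`. -/
noncomputable def realHam (n : ℕ) (a q : Fin n → ℂ) (u : ℝ) : ℝ :=
  2 * (∑ k : Fin n, (-(a k) - 2 * ∑ s ∈ Finset.Icc 1 (n - 1),
      Complex.exp (-(s : ℂ) * (u : ℂ) * Complex.I) *
        ((toeplitzA a ^ s).mulVec a) k) * q k).re

open Finset Matrix

def extendByZero {α : Type*} [Zero α] {n : ℕ} (x : Fin n → α) (m : ℕ) : α :=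
  if h : m < n then x ⟨m, h⟩ else 0

@[simp]
lemma extendByZero_val {α : Type*} [Zero α] {n : ℕ} (x : Fin n → α) (i : Fin n) :
    extendByZero x i = x i := by
  simp [extendByZero]

lemma Fin.sum_univ_ite_mem {M : Type*} [AddCommMonoid M] {n : ℕ} (f : ℕ → M) {t : Finset ℕ}
    (ht : t ⊆ range n) : ∑ l : Fin n, (if (l : ℕ) ∈ t then f l else 0) = ∑ l ∈ t, f l := by
  rw [Fin.sum_univ_eq_sum_range (fun l => if l ∈ t then f l else 0), sum_ite_mem,
    inter_eq_right.mpr ht]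

lemma toeplitzA_apply {n : ℕ} (x : Fin n → ℂ) (j k : Fin n) :
    toeplitzA x j k = if (k : ℕ) < j then extendByZero x (j - k - 1) else 0 := by
  simp only [toeplitzA, Matrix.of_apply, extendByZero]
  split_ifs <;> first | rfl | omega

lemma toeplitzA_mulVec_apply {n : ℕ} (x y : Fin n → ℂ) (k : Fin n) :
    (toeplitzA x *ᵥ y) k = ∑ m ∈ range k, extendByZero x (k - 1 - m) * extendByZero y m := by
  rw [← Fin.sum_univ_ite_mem
    (fun m : ℕ => extendByZero x ((k : ℕ) - 1 - m) * extendByZero y m)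
    (range_subset_range.mpr k.isLt.le)]
  simp only [mulVec, dotProduct]
  refine sum_congr rfl fun l _ => ?_
  simp only [toeplitzA_apply, mem_range, extendByZero_val, Nat.sub_right_comm _ 1, ite_mul,
    zero_mul]

lemma toeplitzA_mulVec_comm {n : ℕ} (x y : Fin n → ℂ) :
    toeplitzA x *ᵥ y = toeplitzA y *ᵥ x := by
  ext k
  rw [toeplitzA_mulVec_apply, toeplitzA_mulVec_apply,
    ← sum_range_reflect (fun m : ℕ => extendByZero y ((k : ℕ) - 1 - m) * extendByZero x m)]
  refine sum_congr rfl fun m hm => ?_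
  rw [mem_range] at hm
  rw [mul_comm, Nat.sub_sub_self (by omega)]

lemma toeplitzA_mul_apply {n : ℕ} (x y : Fin n → ℂ) (j k : Fin n) :
    (toeplitzA x * toeplitzA y) j k
      = ∑ l ∈ Ico (k + 1 : ℕ) j, extendByZero x (j - l - 1) * extendByZero y (l - k - 1) := by
  rw [Matrix.mul_apply, ← Fin.sum_univ_ite_mem (n := n) _ (fun l hl => by
    simp only [mem_Ico, mem_range] at hl ⊢; omega)]
  refine sum_congr rfl fun l _ => ?_
  simp only [toeplitzA_apply, mem_Ico]
  split_ifs <;> first | omega | simp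

lemma toeplitzA_toeplitzA_mulVec {n : ℕ} (x y : Fin n → ℂ) :
    toeplitzA (toeplitzA x *ᵥ y) = toeplitzA x * toeplitzA y := by
  ext j k
  rw [toeplitzA_mul_apply, sum_Ico_eq_sum_range]
  by_cases hkj : (k : ℕ) < j
  · rw [toeplitzA_apply, if_pos hkj, extendByZero, dif_pos (by omega), toeplitzA_mulVec_apply,
      Fin.val_mk, Nat.sub_sub _ k]
    refine sum_congr rfl fun m hm => ?_
    rw [mem_range] at hm
    congr 2 <;> omega
  · rw [toeplitzA_apply, if_neg hkj, Nat.sub_eq_zero_of_le (by omega), sum_range_zero]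

lemma toeplitzA_commute {n : ℕ} (x y : Fin n → ℂ) :
    Commute (toeplitzA x) (toeplitzA y) := by
  rw [commute_iff_eq, ← toeplitzA_toeplitzA_mulVec, ← toeplitzA_toeplitzA_mulVec,
    toeplitzA_mulVec_comm]

lemma toeplitzA_mulVec_pow_mulVec {n : ℕ} (x y : Fin n → ℂ) (m : ℕ) :
    toeplitzA y *ᵥ (toeplitzA x ^ m *ᵥ x) = toeplitzA x ^ (m + 1) *ᵥ y := by
  rw [mulVec_mulVec, ((toeplitzA_commute y x).pow_right m).eq, ← mulVec_mulVec,
    toeplitzA_mulVec_comm, mulVec_mulVec, ← pow_succ]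

section Calculus

variable {s : Set ℝ} {t : ℝ}

theorem HasDerivWithinAt.dotProduct {ι 𝔸 : Type*} [Fintype ι] [NormedCommRing 𝔸]
    [NormedAlgebra ℝ 𝔸] {v w : ℝ → ι → 𝔸} {v' w' : ι → 𝔸}
    (hv : HasDerivWithinAt v v' s t) (hw : HasDerivWithinAt w w' s t) :
    HasDerivWithinAt (fun τ => v τ ⬝ᵥ w τ) (v' ⬝ᵥ w t + v t ⬝ᵥ w') s t := by
  simp only [_root_.dotProduct, ← sum_add_distrib]
  exact HasDerivWithinAt.fun_sum fun i _ =>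
    (hasDerivWithinAt_pi.1 hv i).mul (hasDerivWithinAt_pi.1 hw i)

theorem HasDerivWithinAt.toeplitzA_mulVec {n : ℕ} {a v : ℝ → Fin n → ℂ} {a' v' : Fin n → ℂ}
    (ha : HasDerivWithinAt a a' s t) (hv : HasDerivWithinAt v v' s t) :
    HasDerivWithinAt (fun τ => toeplitzA (a τ) *ᵥ v τ)
      (toeplitzA a' *ᵥ v t + toeplitzA (a t) *ᵥ v') s t := by
  refine hasDerivWithinAt_pi.2 fun j => ?_
  have hrow : HasDerivWithinAt (fun τ => fun k => toeplitzA (a τ) j k)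
      (fun k => toeplitzA a' j k) s t := by
    refine hasDerivWithinAt_pi.2 fun k => ?_
    simp only [toeplitzA, Matrix.of_apply]
    split_ifs
    exacts [hasDerivWithinAt_pi.1 ha _, hasDerivWithinAt_const t s 0]
  exact hrow.dotProduct hv

theorem HasDerivWithinAt.toeplitzA_pow_mulVec {n : ℕ} {a : ℝ → Fin n → ℂ} {a' : Fin n → ℂ}
    (ha : HasDerivWithinAt a a' s t) (m : ℕ) :
    HasDerivWithinAt (fun τ => toeplitzA (a τ) ^ m *ᵥ a τ)
      (((m : ℂ) + 1) • (toeplitzA (a t) ^ m *ᵥ a')) s t := by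
  induction m with
  | zero => simpa using ha
  | succ m ih =>
    simp only [pow_succ', ← mulVec_mulVec]
    convert ha.toeplitzA_mulVec ih using 1
    rw [toeplitzA_mulVec_pow_mulVec, mulVec_smul, mulVec_mulVec, ← pow_succ']
    push_cast
    module

end Calculus

section PhaseField

variable {n : ℕ} (S : Finset ℕ)

-- `f(a, u)` of the phase system, with the range `1 ≤ s ≤ n - 1` of the sum generalised to `S`.
noncomputable def phaseField (a : Fin n → ℂ) (u : ℝ) : Fin n → ℂ := fun k =>
  -(a k) - 2 * ∑ s ∈ S, cexp (-(s : ℂ) * (u : ℂ) * I) * ((toeplitzA a ^ s).mulVec a) k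

noncomputable def phaseJacobian (a : Fin n → ℂ) (u : ℝ) : Matrix (Fin n) (Fin n) ℂ :=
  -1 - (2 : ℂ) • ∑ s ∈ S, (cexp (-(s : ℂ) * u * I) * (s + 1)) • toeplitzA a ^ s

noncomputable def phaseFieldDerivU (a : Fin n → ℂ) (u : ℝ) : Fin n → ℂ :=
  -(2 : ℂ) • ∑ s ∈ S, (cexp (-(s : ℂ) * u * I) * (-(s : ℂ) * I)) • (toeplitzA a ^ s *ᵥ a)

lemma phaseField_eq (a : Fin n → ℂ) (u : ℝ) :
    phaseField S a u
      = -a - (2 : ℂ) • ∑ s ∈ S, cexp (-(s : ℂ) * u * I) • (toeplitzA a ^ s *ᵥ a) := by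
  ext k
  simp [phaseField, Finset.sum_apply]

lemma neg_phaseJacobian_transpose_mulVec_apply (a q : Fin n → ℂ) (u : ℝ) (k : Fin n) :
    (-((phaseJacobian S a u)ᵀ *ᵥ q)) k = q k + 2 * ∑ s ∈ S, cexp (-(s : ℂ) * (u : ℂ) * I) *
      ((s : ℂ) + 1) * (((toeplitzA a).transpose ^ s).mulVec q) k := by
  simp only [phaseJacobian, transpose_sub, transpose_neg, transpose_one, transpose_smul,
    transpose_sum, transpose_pow, neg_mulVec, sub_mulVec, one_mulVec, smul_mulVec, sum_mulVec,
    Pi.neg_apply, Pi.sub_apply, Pi.smul_apply, Finset.sum_apply, smul_eq_mul, mul_assoc]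
  ring

variable {s : Set ℝ} {t : ℝ}

theorem HasDerivWithinAt.phaseField {a : ℝ → Fin n → ℂ} {a' : Fin n → ℂ} {u : ℝ → ℝ} {u' : ℝ}
    (ha : HasDerivWithinAt a a' s t) (hu : HasDerivWithinAt u u' s t) :
    HasDerivWithinAt (fun τ => phaseField S (a τ) (u τ))
      (phaseJacobian S (a t) (u t) *ᵥ a' + u' • phaseFieldDerivU S (a t) (u t)) s t := by
  have hweight (j : ℕ) : HasDerivWithinAt (fun τ => cexp (-(j : ℂ) * u τ * I))
      (u' • (cexp (-(j : ℂ) * u t * I) * (-(j : ℂ) * I))) s t := by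
    have : HasDerivAt (fun v : ℝ => cexp (-(j : ℂ) * v * I))
        (cexp (-(j : ℂ) * u t * I) * (-(j : ℂ) * I)) (u t) := by
      simpa using (((hasDerivAt_id (u t)).ofReal_comp.const_mul (-(j : ℂ))).mul_const I).cexp
    exact this.scomp_hasDerivWithinAt t hu
  simp only [phaseField_eq]
  refine (ha.neg.sub ((HasDerivWithinAt.fun_sum (u := S) fun j _ =>
    (hweight j).smul (ha.toeplitzA_pow_mulVec j)).const_smul (2 : ℂ))).congr_deriv ?_
  simp only [phaseJacobian, phaseFieldDerivU, sub_mulVec, neg_mulVec, one_mulVec, smul_mulVec,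
    sum_mulVec, sum_add_distrib, smul_assoc, smul_smul, ← smul_sum]
  module

end PhaseField

theorem HasDerivWithinAt.dotProduct_of_adjoint {ι 𝔸 : Type*} [Fintype ι] [NormedCommRing 𝔸]
    [NormedAlgebra ℝ 𝔸] {s : Set ℝ} {t c : ℝ} {F q : ℝ → ι → 𝔸} {J : Matrix ι ι 𝔸}
    {g : ι → 𝔸}
    (hF : HasDerivWithinAt F (J *ᵥ F t + c • g) s t)
    (hq : HasDerivWithinAt q (-(Jᵀ *ᵥ q t)) s t) :
    HasDerivWithinAt (fun τ => F τ ⬝ᵥ q τ) (c • (g ⬝ᵥ q t)) s t := by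
  refine (hF.dotProduct hq).congr_deriv ?_
  rw [add_dotProduct, dotProduct_neg, mulVec_transpose, dotProduct_comm (J *ᵥ F t),
    dotProduct_mulVec, dotProduct_comm (F t), smul_dotProduct]
  abel

lemma realHam_eq (n : ℕ) (a q : Fin n → ℂ) (u : ℝ) :
    realHam n a q u = 2 * (phaseField (Finset.Icc 1 (n - 1)) a u ⬝ᵥ q).re :=
  rfl

lemma hasDerivAt_realHam_control (n : ℕ) (a q : Fin n → ℂ) (u : ℝ) :
    HasDerivAt (fun v => realHam n a q v)
      (2 * (phaseFieldDerivU (Finset.Icc 1 (n - 1)) a u ⬝ᵥ q).re) u := by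
  have hf := (hasDerivWithinAt_const u Set.univ a).phaseField (Finset.Icc 1 (n - 1))
    (hasDerivWithinAt_id u Set.univ)
  rw [mulVec_zero, zero_add, one_smul, hasDerivWithinAt_univ] at hf
  have hpair := hasDerivWithinAt_univ.mp
    (hf.hasDerivWithinAt.dotProduct (hasDerivWithinAt_const u _ q))
  simpa [realHam_eq, Function.comp_def] using
    (reCLM.hasFDerivAt.comp_hasDerivAt u hpair).const_mul 2

theorem hasDerivWithinAt_realHam {n : ℕ} {s : Set ℝ} {t u' : ℝ} {a q : ℝ → Fin n → ℂ}
    {u : ℝ → ℝ} (ha : HasDerivWithinAt a (phaseField (Finset.Icc 1 (n - 1)) (a t) (u t)) s t)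
    (hq : HasDerivWithinAt q
      (-((phaseJacobian (Finset.Icc 1 (n - 1)) (a t) (u t))ᵀ *ᵥ q t)) s t)
    (hu : HasDerivWithinAt u u' s t) :
    HasDerivWithinAt (fun τ => realHam n (a τ) (q τ) (u τ))
      (u' * deriv (fun v => realHam n (a t) (q t) v) (u t)) s t := by
  have hpair := (ha.phaseField _ hu).dotProduct_of_adjoint hq
  rw [(hasDerivAt_realHam_control n (a t) (q t) (u t)).deriv]
  refine ((reCLM.hasFDerivAt.comp_hasDerivWithinAt t hpair).const_mul 2).congr_deriv ?_
  simp only [reCLM_apply, smul_re]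
  ring

theorem Convex.is_const_of_hasDerivWithinAt_zero {E : Type*} [NormedAddCommGroup E]
    [NormedSpace ℝ E] {s : Set ℝ} {f : ℝ → E} (hs : Convex ℝ s)
    (hf : ∀ x ∈ s, HasDerivWithinAt f 0 s x) {x y : ℝ} (hx : x ∈ s) (hy : y ∈ s) :
    f x = f y := by
  have hle := hs.norm_image_sub_le_of_norm_hasDerivWithin_le hf (fun _ _ => norm_zero.le) hx hy
  rw [zero_mul, norm_le_zero_iff, sub_eq_zero] at hle
  exact hle.symm

theorem hamiltonian_constant_along_critical_trajectory_general
    (n : ℕ) (I : Set ℝ) (hI : Convex ℝ I)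
    (u : ℝ → ℝ) (hu : ∀ t ∈ I, DifferentiableWithinAt ℝ u I t)
    (a q : ℝ → Fin n → ℂ)
    (ha : ∀ t ∈ I, ∀ k : Fin n,
      HasDerivWithinAt (fun s => a s k)
        (-(a t k) - 2 * ∑ s ∈ Finset.Icc 1 (n - 1),
          Complex.exp (-(s : ℂ) * (u t : ℂ) * Complex.I) *
            ((toeplitzA (a t) ^ s).mulVec (a t)) k) I t)
    (hq : ∀ t ∈ I, ∀ k : Fin n,
      HasDerivWithinAt (fun s => q s k)
        (q t k + 2 * ∑ s ∈ Finset.Icc 1 (n - 1),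
          Complex.exp (-(s : ℂ) * (u t : ℂ) * Complex.I) * ((s : ℂ) + 1) *
            (((toeplitzA (a t)).transpose ^ s).mulVec (q t)) k) I t)
    (hcrit : ∀ t ∈ I, deriv (fun v => realHam n (a t) (q t) v) (u t) = 0) :
    ∀ t ∈ I, ∀ t' ∈ I, realHam n (a t) (q t) (u t) = realHam n (a t') (q t') (u t') := by
  intro t ht t' ht'
  refine hI.is_const_of_hasDerivWithinAt_zero
    (f := fun τ => realHam n (a τ) (q τ) (u τ)) (fun τ hτ => ?_) ht ht'
  have hH := hasDerivWithinAt_realHam (hasDerivWithinAt_pi.2 (ha τ hτ))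
    (hasDerivWithinAt_pi.2 fun k => by
      rw [neg_phaseJacobian_transpose_mulVec_apply]
      exact hq τ hτ k)
    (hu τ hτ).hasDerivWithinAt
  rwa [hcrit τ hτ, mul_zero] at hH

/-- along a trajectory of the phase/adjoint system on which the criticality
condition `∂H/∂u = 0` holds, the Hamiltonian `H(a(t), q(t), u(t))` is constant. -/
theorem hamiltonian_constant_along_critical_trajectory
    (n : ℕ) (hn : 1 ≤ n) (I : Set ℝ) (hI : Convex ℝ I)
    (u : ℝ → ℝ) (hu : ∀ t ∈ I, DifferentiableWithinAt ℝ u I t)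
    (a q : ℝ → Fin n → ℂ)
    (ha : ∀ t ∈ I, ∀ k : Fin n,
      HasDerivWithinAt (fun s => a s k)
        (-(a t k) - 2 * ∑ s ∈ Finset.Icc 1 (n - 1),
          Complex.exp (-(s : ℂ) * (u t : ℂ) * Complex.I) *
            ((toeplitzA (a t) ^ s).mulVec (a t)) k) I t)
    (hq : ∀ t ∈ I, ∀ k : Fin n,
      HasDerivWithinAt (fun s => q s k)
        (q t k + 2 * ∑ s ∈ Finset.Icc 1 (n - 1),
          Complex.exp (-(s : ℂ) * (u t : ℂ) * Complex.I) * ((s : ℂ) + 1) *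
            (((toeplitzA (a t)).transpose ^ s).mulVec (q t)) k) I t)
    (hcrit : ∀ t ∈ I, deriv (fun v => realHam n (a t) (q t) v) (u t) = 0) :
    ∀ t ∈ I, ∀ t' ∈ I, realHam n (a t) (q t) (u t) = realHam n (a t') (q t') (u t') :=
  hamiltonian_constant_along_critical_trajectory_general n I hI u hu a q ha hq hcrit
end
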